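/- The constant c₀ := ∫_{ℝ³} U(ỹ, 0) Z₄(ỹ, 0) dỹ is negative; in fact c₀ = −2π². Explicitly, ∫_{ℝ³} (2/(1 + |ỹ|²)) · (2(1 − |ỹ|²)/(1 + |ỹ|²)²) dỹ = −2π². -/

import Mathlib

noncomputable section
open Real MeasureTheory

/-- `ℝ³`. -/
abbrev E3 : Type := EuclideanSpace ℝ (Fin 3)

/-- The constant `c₀ = ∫_{ℝ³} U(ỹ, 0) Z₄(ỹ, 0) dỹ`, where `U(ỹ, 0) = 2/(1 + |ỹ|²)` is the
boundary trace of the half-space bubble and `Z₄(ỹ, 0) = 2(1 - |ỹ|²)/(1 + |ỹ|²)²`. -/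
def c₀ : ℝ :=
  ∫ y : E3, (2 / (1 + ‖y‖ ^ 2)) * (2 * (1 - ‖y‖ ^ 2) / (1 + ‖y‖ ^ 2) ^ 2)

open Set Filter Topology

def Faux (r : ℝ) : ℝ := (3*r^3 + r)/(1+r^2)^2 - Real.arctan r
lemma hpos (r : ℝ) : (0:ℝ) < 1 + r^2 := by positivity
lemma Faux_deriv (x : ℝ) :
    HasDerivAt Faux (x ^ 2 • ((2 / (1 + x ^ 2)) * (2 * (1 - x ^ 2) / (1 + x ^ 2) ^ 2))) x := by
  have h1 : (1 + x^2) ≠ 0 := (hpos x).ne'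
  have h2 : ((1 + x^2)^2) ≠ 0 := pow_ne_zero _ h1
  have ha : HasDerivAt (fun r : ℝ => 3*r^3 + r) (9*x^2+1) x := by
    have := ((hasDerivAt_pow 3 x).const_mul 3).add (hasDerivAt_id x)
    refine this.congr_deriv ?_; ring
  have hb : HasDerivAt (fun r : ℝ => (1+r^2)^2) (2*(1+x^2)*(2*x)) x := by
    have hb0 : HasDerivAt (fun r : ℝ => 1 + r^2) (2*x) x := by
      simpa using (hasDerivAt_pow 2 x).const_add 1
    have := hb0.pow 2
    refine this.congr_deriv ?_; push_cast; ring
  have hd := (ha.div hb h2).sub (Real.hasDerivAt_arctan x)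
  have : Faux = fun r : ℝ => (3*r^3 + r)/(1+r^2)^2 - Real.arctan r := rfl
  rw [this]
  refine hd.congr_deriv ?_
  rw [smul_eq_mul]
  field_simp
  ring
lemma Faux_tendsto : Tendsto Faux atTop (𝓝 (-(π/2))) := by
  have h1 : Tendsto (fun r : ℝ => (3*r^3 + r)/(1+r^2)^2) atTop (𝓝 0) := by
    have : (fun r : ℝ => (3*r^3 + r)/(1+r^2)^2) =ᶠ[atTop]
        (fun r : ℝ => (3*r⁻¹ + r⁻¹^3)/((r⁻¹^2+1)^2)) := by
      filter_upwards [eventually_gt_atTop 0] with r hr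
      have : r ≠ 0 := hr.ne'
      field_simp
    rw [tendsto_congr' this]
    have hinv : Tendsto (fun r : ℝ => r⁻¹) atTop (𝓝 0) := tendsto_inv_atTop_zero
    have := ((hinv.const_mul 3).add (hinv.pow 3)).div
      (((hinv.pow 2).add_const 1).pow 2) (by norm_num)
    rw [show ((3:ℝ) * 0 + 0 ^ 3) / (0 ^ 2 + 1) ^ 2 = 0 by norm_num] at this
    exact this
  have h2 := Real.tendsto_arctan_atTop.mono_right nhdsWithin_le_nhds
  have := h1.sub h2
  rw [zero_sub] at this
  exact this
lemma integrand_integrable : IntegrableOn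
    (fun x : ℝ => x ^ 2 • ((2 / (1 + x ^ 2)) * (2 * (1 - x ^ 2) / (1 + x ^ 2) ^ 2))) (Ioi 0) := by
  have hc : Continuous (fun x : ℝ => x ^ 2 • ((2 / (1 + x ^ 2)) * (2 * (1 - x ^ 2) / (1 + x ^ 2) ^ 2))) := by
    fun_prop (disch := intro x; positivity)
  refine ((integrable_inv_one_add_sq.const_mul 4).restrict (s := Ioi 0)).mono
    hc.aestronglyMeasurable.restrict ?_
  refine ae_of_all _ fun x => ?_
  have h1 : (0:ℝ) < 1 + x^2 := hpos x
  have h3 : (0:ℝ) < (1 + x^2)^3 := by positivity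
  have e : x ^ 2 • ((2 / (1 + x ^ 2)) * (2 * (1 - x ^ 2) / (1 + x ^ 2) ^ 2))
      = (4*x^2*(1-x^2))/(1+x^2)^3 := by
    rw [smul_eq_mul]; field_simp; ring
  rw [e, Real.norm_eq_abs, Real.norm_eq_abs, abs_of_pos (by positivity : (0:ℝ) < 4 * (1+x^2)⁻¹)]
  rw [abs_le]
  have key : 4 * (1+x^2)⁻¹ = (4*(1+x^2)^2)/(1+x^2)^3 := by field_simp
  rw [key]
  constructor
  · rw [← neg_div, div_le_div_iff₀ h3 h3]
    nlinarith [sq_nonneg (x^2-1), sq_nonneg x, sq_nonneg (x^2+1), pow_pos h1 3, sq_nonneg (x^2*(x^2-1))]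
  · rw [div_le_div_iff₀ h3 h3]
    nlinarith [sq_nonneg (x^2-1), sq_nonneg x, sq_nonneg (x^2+1), pow_pos h1 3, sq_nonneg (x^2*(x^2-1))]
lemma radial_integral : ∫ x in Ioi (0:ℝ),
    x ^ 2 • ((2 / (1 + x ^ 2)) * (2 * (1 - x ^ 2) / (1 + x ^ 2) ^ 2)) = -(π/2) := by
  have := integral_Ioi_of_hasDerivAt_of_tendsto
    (f := Faux) (a := 0) (m := -(π/2))
    (Continuous.continuousWithinAt (by
      unfold Faux
      exact (Continuous.div (by continuity) (by continuity)
        (fun x => pow_ne_zero 2 (hpos x).ne')).sub Real.continuous_arctan))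
    (fun x _ => Faux_deriv x) integrand_integrable Faux_tendsto
  rw [this]
  simp [Faux]

lemma gamma52 : Real.Gamma (3/2 + 1) = 3/4 * Real.sqrt π := by
  rw [Real.Gamma_add_one (by norm_num)]
  have : (3:ℝ)/2 = 1/2 + 1 := by norm_num
  rw [this, Real.Gamma_add_one (by norm_num), Real.Gamma_one_half_eq]
  ring

lemma vol_ball : (volume (Metric.ball (0:E3) 1)).toReal = 4/3 * π := by
  rw [EuclideanSpace.volume_ball]
  rw [Fintype.card_fin]
  have hs : Real.sqrt π ≠ 0 := by positivity
  have hsq : Real.sqrt π ^ 3 = π * Real.sqrt π := by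
    rw [pow_succ, pow_two, Real.mul_self_sqrt Real.pi_pos.le]
  rw [show ((3:ℕ):ℝ)/2 + 1 = 3/2 + 1 by norm_num, gamma52]
  rw [ENNReal.ofReal_one, one_pow, one_mul, ENNReal.toReal_ofReal (by positivity)]
  rw [hsq]
  field_simp

/-- The constant `c₀ := ∫_{ℝ³} U(ỹ, 0) Z₄(ỹ, 0) dỹ` is negative; in fact `c₀ = -2π²`. -/
theorem c₀_eq_neg_two_pi_sq : c₀ = -2 * π ^ 2 ∧ c₀ < 0 := by
  have h := MeasureTheory.integral_fun_norm_addHaar (volume : Measure E3)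
    (fun r : ℝ => (2 / (1 + r ^ 2)) * (2 * (1 - r ^ 2) / (1 + r ^ 2) ^ 2))
  simp only [finrank_euclideanSpace, Fintype.card_fin] at h
  have hc : c₀ = -2 * π ^ 2 := by
    rw [c₀, h, measureReal_def, vol_ball, radial_integral]
    rw [nsmul_eq_mul, smul_eq_mul]
    push_cast
    ring
  exact ⟨hc, by rw [hc]; nlinarith [Real.pi_pos]⟩
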